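/- arXiv:1807.07867 — 3 statements merged into one kernel-verified Lean document; each statement's English description precedes it below -/
import Mathlib

section
/- For every λ > -1 and every μ ∈ ℂ, the series Σ_{n=0}^∞ z^n / (n! Γ(λn + μ)) converges absolutely for every complex number z; hence the Wright function W_{λ,μ}(z) := Σ_{n=0}^∞ z^n / (n! Γ(λn + μ)) is a well-defined entire function on ℂ. -/
/-!
Write `cₙ = 1 / (n! Γ(λn + μ))`. For `λ > 0` the numbers `1 / Γ(λn + μ)` stay bounded: eventually
they lie on the half-line `Im s = Im μ, Re s ≥ 1`, and `Γ(s + 1) = s Γ(s)` with `‖s‖ ≥ 1` pulls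
every such point back to a compact segment, on which the entire function `1 / Γ` is bounded. For
`-1 < λ < 0` the reflection formula bounds `‖1 / Γ(λn + μ)‖` by a multiple of
`Γ(|λ| n + 1 - Re μ)`, and log-convexity of `Γ` gives `Γ(x + |λ|) ≤ Γ(x) x^|λ|`, so by the ratio
test `Γ(|λ| n + d) rⁿ / n!` is summable because `|λ| < 1`. Either way `∑ ‖cₙ‖ rⁿ < ∞` for every
`r`, so the power series `∑ cₙ zⁿ` has infinite radius of convergence.
-/

open Complex Filter Topology Asymptotics
open scoped Nat NNReal

namespace Complex

theorem norm_sin_le_exp_abs_im (w : ℂ) : ‖sin w‖ ≤ Real.exp |w.im| := by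
  rw [sin, norm_div, norm_mul, norm_I, mul_one, RCLike.norm_ofNat, div_le_iff₀ two_pos]
  calc ‖cexp (-w * I) - cexp (w * I)‖ ≤ ‖cexp (-w * I)‖ + ‖cexp (w * I)‖ :=
        norm_sub_le _ _
    _ ≤ Real.exp |w.im| * 2 := by
      rw [norm_exp, norm_exp]
      simp only [neg_mul, neg_re, mul_re, I_re, mul_zero, I_im, mul_one, zero_sub, neg_neg]
      linarith [Real.exp_le_exp.2 (le_abs_self w.im), Real.exp_le_exp.2 (neg_le_abs w.im)]

theorem norm_Gamma_le_Gamma_re {s : ℂ} (hs : 0 < s.re) : ‖Gamma s‖ ≤ Real.Gamma s.re := by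
  rw [Gamma_eq_integral hs, Real.Gamma_eq_integral hs, GammaIntegral]
  refine MeasureTheory.norm_integral_le_of_norm_le (Real.GammaIntegral_convergent hs) ?_
  refine (MeasureTheory.ae_restrict_iff' measurableSet_Ioi).mpr (.of_forall fun x hx => ?_)
  rw [norm_mul, norm_real, norm_cpow_eq_rpow_re_of_pos hx]
  simp [abs_of_pos (Real.exp_pos (-x))]

theorem norm_inv_Gamma_le_of_re_lt_one {s : ℂ} (hs : s.re < 1) :
    ‖(Gamma s)⁻¹‖ ≤ Real.exp (Real.pi * |s.im|) / Real.pi * Real.Gamma (1 - s.re) := by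
  have hre : 0 < (1 - s).re := by simpa using hs
  rcases eq_or_ne (Gamma s) 0 with hzero | hne
  · rw [hzero, inv_zero, norm_zero]
    have := Real.Gamma_pos_of_pos (sub_pos.2 hs)
    positivity
  have hsin : sin (Real.pi * s) ≠ 0 := fun h => by
    simpa [h, hne, Gamma_ne_zero_of_re_pos hre] using Gamma_mul_Gamma_one_sub s
  have hinv : (Gamma s)⁻¹ = Gamma (1 - s) * sin (Real.pi * s) / Real.pi := by
    field_simp
    rw [Gamma_mul_Gamma_one_sub, mul_comm s, div_mul_cancel₀ _ hsin]
  have hsin_le : ‖sin (Real.pi * s)‖ ≤ Real.exp (Real.pi * |s.im|) := by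
    simpa [abs_mul, abs_of_pos Real.pi_pos] using norm_sin_le_exp_abs_im (Real.pi * s)
  have hGamma_le : ‖Gamma (1 - s)‖ ≤ Real.Gamma (1 - s.re) := by
    simpa using norm_Gamma_le_Gamma_re hre
  rw [hinv, norm_div, norm_mul, norm_real, Real.norm_of_nonneg Real.pi_pos.le,
    div_mul_eq_mul_div, mul_comm (Real.exp _)]
  gcongr

theorem norm_inv_Gamma_add_nat_le {s : ℂ} (hs : 1 ≤ s.re) (m : ℕ) :
    ‖(Gamma (s + m))⁻¹‖ ≤ ‖(Gamma s)⁻¹‖ := by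
  induction m with
  | zero => simp
  | succ m ih =>
    have hre : 1 ≤ (s + m).re := by simp; linarith [m.cast_nonneg (α := ℝ)]
    have hne : s + m ≠ 0 := fun h => by norm_num [h] at hre
    calc ‖(Gamma (s + (m + 1 : ℕ)))⁻¹‖ = ‖s + m‖⁻¹ * ‖(Gamma (s + m))⁻¹‖ := by
          rw [Nat.cast_succ, ← add_assoc, Gamma_add_one _ hne, mul_inv, norm_mul, norm_inv]
      _ ≤ ‖(Gamma (s + m))⁻¹‖ := mul_le_of_le_one_left (norm_nonneg _)
          (inv_le_one_of_one_le₀ (hre.trans (re_le_norm _)))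
      _ ≤ ‖(Gamma s)⁻¹‖ := ih

theorem exists_norm_inv_Gamma_le_of_im_eq (y : ℝ) :
    ∃ C, ∀ s : ℂ, s.im = y → 1 ≤ s.re → ‖(Gamma s)⁻¹‖ ≤ C := by
  have hcont : Continuous fun x : ℝ => (Gamma (x + y * I))⁻¹ :=
    differentiable_one_div_Gamma.continuous.comp (by fun_prop)
  obtain ⟨C, hC⟩ := (isCompact_Icc (a := (1 : ℝ)) (b := 2)).exists_bound_of_continuousOn
    hcont.continuousOn
  refine ⟨C, fun s hs hre => ?_⟩
  set m := ⌊s.re - 1⌋₊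
  have h1 : (m : ℝ) ≤ s.re - 1 := Nat.floor_le (by linarith)
  have h2 : s.re - 1 < m + 1 := Nat.lt_floor_add_one _
  have hseg : ((s.re - m : ℝ) : ℂ) + y * I = s - m := by apply Complex.ext <;> simp [hs]
  calc ‖(Gamma s)⁻¹‖ = ‖(Gamma (s - m + m))⁻¹‖ := by rw [sub_add_cancel]
    _ ≤ ‖(Gamma (s - m))⁻¹‖ := norm_inv_Gamma_add_nat_le (by simp; linarith) m
    _ ≤ C := hseg ▸ hC _ ⟨by linarith, by linarith⟩

end Complex

namespace Real

theorem Gamma_add_le_mul_rpow {x a : ℝ} (hx : 0 < x) (ha₀ : 0 < a) (ha₁ : a < 1) :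
    Gamma (x + a) ≤ Gamma x * x ^ a := by
  have hΓ := Gamma_pos_of_pos hx
  have h := Gamma_mul_add_mul_le_rpow_Gamma_mul_rpow_Gamma hx (by linarith : 0 < x + 1)
    (sub_pos.2 ha₁) ha₀ (by ring)
  calc Gamma (x + a) = Gamma ((1 - a) * x + a * (x + 1)) := by ring_nf
    _ ≤ Gamma x ^ (1 - a) * Gamma (x + 1) ^ a := h
    _ = Gamma x * x ^ a := by
      rw [Gamma_add_one hx.ne', mul_rpow hx.le hΓ.le, mul_left_comm, ← rpow_add hΓ,
        sub_add_cancel, rpow_one, mul_comm]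

theorem summable_Gamma_mul_add_mul_pow_div_factorial {α : ℝ} (hα₀ : 0 < α) (hα₁ : α < 1)
    (d r : ℝ) : Summable fun n : ℕ => Gamma (α * n + d) * (r ^ n / n !) := by
  have hpos : ∀ᶠ n : ℕ in atTop, 0 < α * n + d :=
    ((tendsto_natCast_atTop_atTop.const_mul_atTop hα₀).atTop_add
      tendsto_const_nhds).eventually_gt_atTop 0
  have hle : ∀ᶠ n : ℕ in atTop, α * n + d ≤ n + 1 := by
    filter_upwards [(tendsto_natCast_atTop_atTop.const_mul_atTop
      (sub_pos.2 hα₁)).eventually_ge_atTop (d - 1)] with n hn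
    linarith
  have hsmall : ∀ᶠ n : ℕ in atTop, |r| * ((n : ℝ) + 1) ^ (α - 1) ≤ 1 / 2 := by
    have : Tendsto (fun n : ℕ => |r| * ((n : ℝ) + 1) ^ (α - 1)) atTop (𝓝 (|r| * 0)) := by
      refine tendsto_const_nhds.mul ?_
      simpa [Function.comp_def] using (tendsto_rpow_neg_atTop (sub_pos.2 hα₁)).comp
        (tendsto_natCast_atTop_atTop.atTop_add (tendsto_const_nhds (x := (1 : ℝ))))
    rw [mul_zero] at this
    exact this.eventually (ge_mem_nhds one_half_pos)
  refine summable_of_ratio_norm_eventually_le one_half_lt_one ?_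
  filter_upwards [hpos, hle, hsmall] with n hpos hle hsmall
  set x := α * n + d
  have hx : α * (n + 1 : ℕ) + d = x + α := by push_cast; ring
  have hΓ := Gamma_pos_of_pos hpos
  have hΓα := Gamma_pos_of_pos (add_pos hpos hα₀)
  have hn : (0 : ℝ) < n + 1 := by positivity
  calc ‖Gamma (α * (n + 1 : ℕ) + d) * (r ^ (n + 1) / (n + 1)!)‖
        = Gamma (x + α) * (|r| ^ n / n !) * (|r| / (n + 1)) := by
          rw [hx, Real.norm_eq_abs, abs_mul, abs_div, abs_pow, abs_of_pos hΓα, Nat.abs_cast,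
            Nat.factorial_succ]
          push_cast
          field_simp
          ring
    _ ≤ Gamma x * (n + 1) ^ α * (|r| ^ n / n !) * (|r| / (n + 1)) := by
          gcongr
          exact (Gamma_add_le_mul_rpow hpos hα₀ hα₁).trans (by gcongr)
    _ = |r| * ((n : ℝ) + 1) ^ (α - 1) * ‖Gamma x * (r ^ n / n !)‖ := by
          rw [rpow_sub_one hn.ne', Real.norm_eq_abs, abs_mul, abs_div, abs_pow, abs_of_pos hΓ,
            Nat.abs_cast]
          field_simp
    _ ≤ 1 / 2 * ‖Gamma x * (r ^ n / n !)‖ := by gcongr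

end Real

theorem differentiable_tsum_mul_pow {𝕜 : Type*} [NontriviallyNormedField 𝕜] [CompleteSpace 𝕜]
    {c : ℕ → 𝕜} (hc : ∀ r : ℝ≥0, Summable fun n => ‖c n‖ * (r : ℝ) ^ n) :
    Differentiable 𝕜 fun z => ∑' n, c n * z ^ n := by
  set p := FormalMultilinearSeries.ofScalars 𝕜 c
  have hp : p.radius = ⊤ :=
    p.radius_eq_top_of_summable_norm fun r => by
      simpa only [p, FormalMultilinearSeries.ofScalars_norm] using hc r
  have hsum : (fun z => ∑' n, c n * z ^ n) = p.sum := funext fun z => tsum_congr fun n => by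
    rw [FormalMultilinearSeries.ofScalars_apply_eq, smul_eq_mul]
  rw [hsum, ← differentiableOn_univ]
  simpa [hp] using (p.hasFPowerSeriesOnBall (hp ▸ ENNReal.zero_lt_top)).differentiableOn

/-- `Gamma` vanishes at its poles, so `0⁻¹ = 0` realizes the convention `1 / Γ = 0` there. -/
noncomputable def wrightCoeff (lam : ℝ) (mu : ℂ) (n : ℕ) : ℂ :=
  ((n ! : ℂ) * Gamma (lam * n + mu))⁻¹

theorem isBigO_inv_Gamma_of_nonneg {lam : ℝ} (hlam : 0 ≤ lam) (mu : ℂ) :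
    (fun n : ℕ => (Gamma (lam * n + mu))⁻¹) =O[atTop] fun _ => (1 : ℝ) := by
  rcases hlam.eq_or_lt with rfl | hpos
  · simpa using isBigO_const_one ℝ (Gamma mu)⁻¹ atTop
  obtain ⟨C, hC⟩ := exists_norm_inv_Gamma_le_of_im_eq mu.im
  have hre : ∀ᶠ n : ℕ in atTop, 1 ≤ lam * n + mu.re :=
    ((tendsto_natCast_atTop_atTop.const_mul_atTop hpos).atTop_add
      tendsto_const_nhds).eventually_ge_atTop 1
  refine IsBigO.of_bound C ?_
  filter_upwards [hre] with n hn
  simpa using hC _ (by simp) (by simpa using hn)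

theorem isBigO_inv_Gamma_of_neg {lam : ℝ} (hlam : lam < 0) (mu : ℂ) :
    (fun n : ℕ => (Gamma (lam * n + mu))⁻¹) =O[atTop]
      fun n : ℕ => Real.Gamma (-lam * n + (1 - mu.re)) := by
  have hre : ∀ᶠ n : ℕ in atTop, lam * n + mu.re < 1 :=
    ((tendsto_natCast_atTop_atTop.const_mul_atTop_of_neg hlam).atBot_add
      tendsto_const_nhds).eventually_lt_atBot 1
  refine IsBigO.of_bound (Real.exp (Real.pi * |mu.im|) / Real.pi) ?_
  filter_upwards [hre] with n hn
  rw [Real.norm_of_nonneg (Real.Gamma_pos_of_pos (by linarith)).le]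
  convert norm_inv_Gamma_le_of_re_lt_one (s := lam * n + mu) (by simpa using hn) using 3
  · simp
  · simp only [add_re, mul_re, ofReal_re, natCast_re, ofReal_im, natCast_im, mul_zero, sub_zero]
    ring

theorem summable_norm_wrightCoeff_mul_pow {lam : ℝ} (hlam : -1 < lam) (mu : ℂ) (r : ℝ) :
    Summable fun n => ‖wrightCoeff lam mu n‖ * r ^ n := by
  have hsplit : ∀ n : ℕ,
      ‖wrightCoeff lam mu n‖ * r ^ n = ‖(Gamma (lam * n + mu))⁻¹‖ * (r ^ n / n !) := fun n => by
    rw [wrightCoeff, mul_inv, norm_mul, norm_inv (n ! : ℂ), norm_natCast]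
    ring
  simp_rw [hsplit]
  rcases le_or_gt 0 lam with hnonneg | hneg
  · exact summable_of_isBigO_nat (by simpa using Real.summable_pow_div_factorial r)
      ((isBigO_inv_Gamma_of_nonneg hnonneg mu).norm_left.mul (isBigO_refl _ _))
  · exact summable_of_isBigO_nat
      (Real.summable_Gamma_mul_add_mul_pow_div_factorial (neg_pos.2 hneg) (by linarith) _ r)
      ((isBigO_inv_Gamma_of_neg hneg mu).norm_left.mul (isBigO_refl _ _))

/-- For `λ > -1` and `μ ∈ ℂ`, the Wright series `∑ zⁿ / (n! Γ(λn + μ))` converges absolutely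
for every `z ∈ ℂ`, and the Wright function `W_{λ,μ}` is entire.  (With the convention
`1/Γ = 0` at the poles of `Γ`, which holds for Mathlib's `Complex.Gamma` since it
vanishes at the nonpositive integers.) -/
theorem wright_summable_and_entire (lam : ℝ) (hlam : -1 < lam) (mu : ℂ) :
    (∀ z : ℂ, Summable fun n : ℕ =>
        ‖z ^ n / ((n.factorial : ℂ) * Complex.Gamma ((lam : ℂ) * n + mu))‖) ∧
    Differentiable ℂ (fun z : ℂ =>
        ∑' n : ℕ, z ^ n / ((n.factorial : ℂ) * Complex.Gamma ((lam : ℂ) * n + mu))) := by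
  have hterm : ∀ (z : ℂ) (n : ℕ), z ^ n / ((n.factorial : ℂ) * Complex.Gamma ((lam : ℂ) * n + mu))
      = wrightCoeff lam mu n * z ^ n :=
    fun z n => by rw [wrightCoeff, div_eq_mul_inv, mul_comm]
  simp only [hterm]
  refine ⟨fun z => ?_,
    differentiable_tsum_mul_pow fun r => summable_norm_wrightCoeff_mul_pow hlam mu r⟩
  simpa only [norm_mul, norm_pow] using summable_norm_wrightCoeff_mul_pow hlam mu ‖z‖
end

section
/- For every z ∈ ℂ, the M-Wright function of order 1/2 satisfies M_{1/2}(z) = (1/√π) · exp(−z²/4). -/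
/-!
The odd terms of the series vanish, since `1/Γ` is zero at `-k`. For the even terms, the
recursion `Γ(s + 1) = s Γ(s)` run downwards from `Γ(1/2) = √π` gives
`Γ(1/2 - k) (2k)! = (-4)ᵏ k! √π`, which turns the term of index `2k` into `(-z²/4)ᵏ / (k! √π)`:
what remains is the exponential series.
-/

open Complex

theorem Complex.Gamma_one_half_sub_nat_mul_factorial (k : ℕ) :
    Gamma (1 / 2 - k) * (2 * k).factorial = (-4) ^ k * k.factorial * Real.sqrt Real.pi := by
  induction k with
  | zero => simpa [Real.sqrt_eq_rpow, ofReal_cpow Real.pi_pos.le] using Gamma_one_half_eq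
  | succ k ih =>
    have hrec : Gamma (1 / 2 - k) = (1 / 2 - (k + 1)) * Gamma (1 / 2 - (k + 1)) := by
      rw [← Gamma_add_one]
      · ring_nf
      · intro h
        have := congrArg re h
        norm_num at this
        linarith
    rw [show 2 * (k + 1) = 2 * k + 1 + 1 by ring]
    push_cast [Nat.factorial_succ]
    linear_combination (-4 * (k + 1) : ℂ) * ih + (4 * (k + 1) * (2 * k).factorial : ℂ) * hrec

noncomputable def mWrightTerm (β z : ℂ) (n : ℕ) : ℂ :=
  (-z) ^ n / (n.factorial * Gamma (-β * n + 1 - β))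

lemma mWrightTerm_half_two_mul (z : ℂ) (k : ℕ) :
    mWrightTerm (1 / 2) z (2 * k) = (-z ^ 2 / 4) ^ k / k.factorial / Real.sqrt Real.pi := by
  have hπ : (Real.sqrt Real.pi : ℂ) ≠ 0 := ofReal_ne_zero.mpr (Real.sqrt_ne_zero'.mpr Real.pi_pos)
  rw [mWrightTerm, show -(1 / 2) * ((2 * k : ℕ) : ℂ) + 1 - 1 / 2 = 1 / 2 - k by push_cast; ring,
    mul_comm _ (Gamma _), Gamma_one_half_sub_nat_mul_factorial, pow_mul, neg_sq,
    show -z ^ 2 / 4 = z ^ 2 / -4 by ring, div_pow]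
  field_simp

lemma mWrightTerm_half_two_mul_add_one (z : ℂ) (k : ℕ) :
    mWrightTerm (1 / 2) z (2 * k + 1) = 0 := by
  rw [mWrightTerm, show -(1 / 2) * ((2 * k + 1 : ℕ) : ℂ) + 1 - 1 / 2 = -k by push_cast; ring,
    Gamma_neg_nat_eq_zero, mul_zero, div_zero]

/-- The M-Wright function of order `1/2`, given by the series
`M_{1/2}(z) = ∑ (-z)ⁿ / (n! Γ(-n/2 + 1 - 1/2))`, equals `(1/√π) exp(-z²/4)`. -/
theorem mWright_half_eq_gaussian (z : ℂ) :
    ∑' n : ℕ, (-z) ^ n /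
        ((n.factorial : ℂ) * Complex.Gamma (-(1 / 2 : ℂ) * n + 1 - 1 / 2)) =
      (1 / Real.sqrt Real.pi : ℝ) * Complex.exp (-z ^ 2 / 4) := by
  have heven : HasSum (fun k ↦ mWrightTerm (1 / 2) z (2 * k))
      (Complex.exp (-z ^ 2 / 4) / Real.sqrt Real.pi) := by
    simp only [mWrightTerm_half_two_mul, exp_eq_exp_ℂ]
    exact (NormedSpace.expSeries_div_hasSum_exp _).div_const _
  have hodd : HasSum (fun k ↦ mWrightTerm (1 / 2) z (2 * k + 1)) 0 := by
    simpa only [mWrightTerm_half_two_mul_add_one] using hasSum_zero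
  calc ∑' n : ℕ, mWrightTerm (1 / 2) z n
      = Complex.exp (-z ^ 2 / 4) / Real.sqrt Real.pi + 0 := (heven.even_add_odd hodd).tsum_eq
    _ = _ := by push_cast; ring
end

section
/- Let d ∈ ℕ, 0 < β ≤ 1, and let μ be a Borel probability measure on S'_d such that ∫_{S'_d} e^{i⟨w,φ⟩₀} dμ(w) = E_β(−|φ|₀²/2) for all φ ∈ S_d. Then for all φ, ψ ∈ S_d, ∫_{S'_d} ⟨w,φ⟩₀ ⟨w,ψ⟩₀ dμ(w) = (1/Γ(β+1)) · ⟨φ,ψ⟩₀. -/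
open MeasureTheory

/-- Borel σ-algebra on the space `S'(ℝ)` of tempered distributions (continuous linear
functionals on the Schwartz space, with the strong topology). -/
noncomputable instance : MeasurableSpace (SchwartzMap ℝ ℝ →L[ℝ] ℝ) := borel _

/-- The dual pairing `⟨w, φ⟩₀ = ∑ₖ ⟨wₖ, φₖ⟩` between `S'_d` and `S_d`. -/
noncomputable def pairing {d : ℕ} (w : Fin d → (SchwartzMap ℝ ℝ →L[ℝ] ℝ))
    (φ : Fin d → SchwartzMap ℝ ℝ) : ℝ :=
  ∑ k, w k (φ k)

/-- The scalar product `⟨φ, ψ⟩₀ = ∑ₖ ∫ φₖ(x) ψₖ(x) dx` on `S_d`. -/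
noncomputable def innerL2 {d : ℕ} (φ ψ : Fin d → SchwartzMap ℝ ℝ) : ℝ :=
  ∑ k, ∫ x : ℝ, φ k x * ψ k x

/-- The Mittag-Leffler function `E_β(x) = ∑ xⁿ / Γ(βn + 1)` (real argument). -/
noncomputable def mittagLeffler (β x : ℝ) : ℝ :=
  ∑' n : ℕ, x ^ n / Real.Gamma (β * n + 1)

/-!
Write `X = ⟨w, χ⟩₀`. Taking real parts of the characteristic functional at `tχ` gives
`∫ cos (t X) dμ = E_β(-t² |χ|₀² / 2)`. `E_β` is a power series with bounded coefficients
(`Γ` has a positive minimum on `(0, ∞)`), so `E_β(x) = 1 + x / Γ(β + 1) + o(x)` and hence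
`2 (1 - ∫ cos (t X) dμ) / t² → |χ|₀² / Γ(β + 1)` as `t → 0`. The integrands
`2 (1 - cos (t X)) / t²` are nonnegative, bounded by `X²` and tend to `X²`, so Fatou's lemma
identifies the limit with `∫ X² dμ`. Polarization then gives the mixed moments.
-/

open Filter Topology Real

theorem hasDerivAt_tsum_mul_pow_of_bounded {𝕜 : Type*} [NontriviallyNormedField 𝕜]
    [CompleteSpace 𝕜] {c : ℕ → 𝕜} {M : ℝ} (hc : ∀ n, ‖c n‖ ≤ M) :
    HasDerivAt (fun x => ∑' n, c n * x ^ n) (c 1) 0 := by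
  set p := FormalMultilinearSeries.ofScalars 𝕜 c
  have hr : ((1 : NNReal) : ENNReal) ≤ p.radius :=
    p.le_radius_of_bound M fun n => by simpa [p] using hc n
  have hsum : p.sum = fun x => ∑' n, c n * x ^ n :=
    FormalMultilinearSeries.ofScalarsSum_eq_tsum c
  have hcoeff : (p 1 fun _ => 1) = c 1 := by simp [p]
  simpa only [hsum, hcoeff] using
    (p.hasFPowerSeriesOnBall (zero_lt_one.trans_le hr)).hasFPowerSeriesAt.hasDerivAt

theorem hasDerivAt_mittagLeffler_zero {β : ℝ} (hβ : 0 ≤ β) :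
    HasDerivAt (mittagLeffler β) (Gamma (β + 1))⁻¹ 0 := by
  obtain ⟨x₀, hx₀, hmin⟩ := exists_isMinOn_Gamma_Ioi
  have hbound (n : ℕ) : ‖(Gamma (β * n + 1))⁻¹‖ ≤ (Gamma x₀)⁻¹ := by
    have hpos : 0 < β * n + 1 := by positivity
    rw [norm_inv, norm_of_nonneg (Gamma_pos_of_pos hpos).le]
    exact inv_anti₀ (Gamma_pos_of_pos (zero_lt_one.trans hx₀.1)) (hmin hpos)
  have hseries : mittagLeffler β = fun x => ∑' n : ℕ, (Gamma (β * n + 1))⁻¹ * x ^ n := by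
    ext x; simp only [mittagLeffler, div_eq_inv_mul]
  simpa [hseries] using hasDerivAt_tsum_mul_pow_of_bounded hbound

theorem mittagLeffler_zero (β : ℝ) : mittagLeffler β 0 = 1 := by
  rw [mittagLeffler, tsum_eq_single 0 (fun n hn => by simp [hn])]
  simp

theorem HasDerivAt.tendsto_two_mul_sub_div_sq {f : ℝ → ℝ} {f' : ℝ} (hf : HasDerivAt f f' 0)
    (c : ℝ) :
    Tendsto (fun t => 2 * (f 0 - f (-(t ^ 2 * c) / 2)) / t ^ 2) (𝓝[≠] 0) (𝓝 (c * f')) := by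
  have hg : HasDerivAt (fun u => f (-(c / 2) * u)) (f' * -(c / 2)) 0 :=
    HasDerivAt.comp (h₂ := f) 0 (by rwa [mul_zero]) (hasDerivAt_const_mul _)
  have hsq : Tendsto (fun t : ℝ => t ^ 2) (𝓝[≠] 0) (𝓝[≠] 0) :=
    tendsto_nhdsWithin_of_tendsto_nhds_of_eventually_within _
      ((continuous_pow 2).tendsto' 0 0 (zero_pow two_ne_zero) |>.mono_left nhdsWithin_le_nhds)
      (eventually_nhdsWithin_of_forall fun t ht => pow_ne_zero 2 ht)
  convert ((hasDerivAt_iff_tendsto_slope.1 hg).comp hsq).const_mul (-2) using 2 with t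
  · simp only [Function.comp, slope_fun_def_field, mul_zero, sub_zero]
    ring_nf
  · ring

theorem two_mul_one_sub_cos_div_sq_le (t x : ℝ) : 2 * (1 - cos (t * x)) / t ^ 2 ≤ x ^ 2 :=
  div_le_of_le_mul₀ (sq_nonneg t) (sq_nonneg x) (by
    nlinarith [one_sub_sq_div_two_le_cos (x := t * x)])

theorem tendsto_two_mul_one_sub_cos_div_sq (x : ℝ) :
    Tendsto (fun t => 2 * (1 - cos (t * x)) / t ^ 2) (𝓝[≠] 0) (𝓝 (x ^ 2)) := by
  have h : HasDerivAt (fun t => 2 * sin (x / 2 * t)) x 0 := by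
    refine (((hasDerivAt_sin _).comp (0 : ℝ) (hasDerivAt_const_mul (x / 2))).const_mul
      2).congr_deriv ?_
    simp only [mul_zero, cos_zero, one_mul]
    ring
  refine ((hasDerivAt_iff_tendsto_slope.1 h).pow 2).congr fun t => ?_
  simp only [slope_fun_def_field, mul_zero, sin_zero, sub_zero]
  rw [div_pow, mul_pow, sin_sq_eq_half_sub]
  ring_nf

section

variable {Ω : Type*} [MeasurableSpace Ω] {μ : Measure Ω}

theorem lintegral_eq_of_le_of_tendsto {ι : Type*} {l : Filter ι} [l.IsCountablyGenerated]
    [l.NeBot] {f : Ω → ENNReal} {g : ι → Ω → ENNReal} (hg : ∀ i, AEMeasurable (g i) μ)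
    (hgf : ∀ i, g i ≤ f) (hlim : ∀ ω, Tendsto (g · ω) l (𝓝 (f ω))) {L : ENNReal}
    (hL : Tendsto (fun i => ∫⁻ ω, g i ω ∂μ) l (𝓝 L)) :
    ∫⁻ ω, f ω ∂μ = L := by
  refine le_antisymm ?_ (le_of_tendsto' hL fun i => lintegral_mono (hgf i))
  calc ∫⁻ ω, f ω ∂μ = ∫⁻ ω, liminf (g · ω) l ∂μ := by
        simp only [fun ω => (hlim ω).liminf_eq]
    _ ≤ liminf (fun i => ∫⁻ ω, g i ω ∂μ) l := lintegral_liminf_le' hg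
    _ = L := hL.liminf_eq

theorem integrable_sq_and_integral_sq_eq_of_tendsto_cos [IsProbabilityMeasure μ] {X : Ω → ℝ}
    (hX : AEMeasurable X μ) {L : ℝ}
    (h : Tendsto (fun t => 2 * (1 - ∫ ω, cos (t * X ω) ∂μ) / t ^ 2) (𝓝[≠] 0) (𝓝 L)) :
    Integrable (fun ω => X ω ^ 2) μ ∧ ∫ ω, X ω ^ 2 ∂μ = L := by
  set g : ℝ → Ω → ℝ := fun t ω => 2 * (1 - cos (t * X ω)) / t ^ 2
  have hg_nonneg (t : ℝ) (ω : Ω) : 0 ≤ g t ω :=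
    div_nonneg (by linarith [cos_le_one (t * X ω)]) (sq_nonneg t)
  have hcos_int (t : ℝ) : Integrable (fun ω => cos (t * X ω)) μ :=
    Integrable.of_bound (by fun_prop : AEMeasurable _ μ).aestronglyMeasurable 1
      (ae_of_all _ fun _ => abs_cos_le_one _)
  have hg_int (t : ℝ) : Integrable (g t) μ :=
    (((integrable_const 1).sub (hcos_int t)).const_mul 2).div_const _
  have hg_integral (t : ℝ) :
      ∫ ω, g t ω ∂μ = 2 * (1 - ∫ ω, cos (t * X ω) ∂μ) / t ^ 2 := by
    simp only [g, integral_div, integral_const_mul,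
      integral_sub (integrable_const 1) (hcos_int t), integral_const, probReal_univ, smul_eq_mul,
      mul_one]
  have hL : 0 ≤ L := ge_of_tendsto' h fun t => hg_integral t ▸ integral_nonneg (hg_nonneg t)
  have hlintegral : ∫⁻ ω, ENNReal.ofReal (X ω ^ 2) ∂μ = ENNReal.ofReal L := by
    refine lintegral_eq_of_le_of_tendsto (l := 𝓝[≠] 0)
      (g := fun t ω => ENNReal.ofReal (g t ω))
      (fun t => (hg_int t).aemeasurable.ennreal_ofReal)
      (fun t ω => ENNReal.ofReal_le_ofReal (two_mul_one_sub_cos_div_sq_le t (X ω)))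
      (fun ω => (ENNReal.continuous_ofReal.tendsto _).comp
        (tendsto_two_mul_one_sub_cos_div_sq (X ω))) ?_
    simp_rw [← ofReal_integral_eq_lintegral_ofReal (hg_int _) (ae_of_all _ (hg_nonneg _)),
      hg_integral]
    exact (ENNReal.continuous_ofReal.tendsto _).comp h
  have hX2_nonneg : 0 ≤ᵐ[μ] fun ω => X ω ^ 2 := ae_of_all _ fun ω => sq_nonneg (X ω)
  refine ⟨⟨(hX.pow_const 2).aestronglyMeasurable, ?_⟩, ?_⟩
  · rw [hasFiniteIntegral_iff_ofReal hX2_nonneg, hlintegral]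
    exact ENNReal.ofReal_lt_top
  · rw [integral_eq_lintegral_of_nonneg_ae hX2_nonneg (hX.pow_const 2).aestronglyMeasurable,
      hlintegral, ENNReal.toReal_ofReal hL]

theorem integral_cos_eq_re_integral_exp_mul_I [IsFiniteMeasure μ] {X : Ω → ℝ}
    (hX : AEMeasurable X μ) :
    ∫ ω, cos (X ω) ∂μ = (∫ ω, Complex.exp (Complex.I * X ω) ∂μ).re := by
  have hint : Integrable (fun ω => Complex.exp (Complex.I * X ω)) μ :=
    Integrable.of_bound (by fun_prop : AEMeasurable _ μ).aestronglyMeasurable 1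
      (ae_of_all _ fun ω => by rw [mul_comm, Complex.norm_exp_ofReal_mul_I])
  have hre := integral_re hint
  simp only [RCLike.re_to_complex, mul_comm Complex.I, Complex.exp_ofReal_mul_I_re] at hre
  simp only [mul_comm Complex.I, ← hre]

theorem integral_add_sq {X Y : Ω → ℝ} (hX : MemLp X 2 μ) (hY : MemLp Y 2 μ) :
    ∫ ω, (X ω + Y ω) ^ 2 ∂μ
      = ∫ ω, X ω ^ 2 ∂μ + 2 * ∫ ω, X ω * Y ω ∂μ + ∫ ω, Y ω ^ 2 ∂μ := by
  have hXY : Integrable (fun ω => X ω * Y ω) μ := hX.integrable_mul hY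
  simp_rw [add_sq, mul_assoc]
  rw [integral_add (f := fun ω => X ω ^ 2 + 2 * (X ω * Y ω))
      (hX.integrable_sq.add (hXY.const_mul 2)) hY.integrable_sq,
    integral_add hX.integrable_sq (hXY.const_mul 2), integral_const_mul]

end

instance : BorelSpace (SchwartzMap ℝ ℝ →L[ℝ] ℝ) := ⟨rfl⟩

section
variable {d : ℕ}

theorem measurable_pairing (φ : Fin d → SchwartzMap ℝ ℝ) :
    Measurable fun w : Fin d → (SchwartzMap ℝ ℝ →L[ℝ] ℝ) => pairing w φ :=
  Finset.measurable_sum _ fun k _ =>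
    (continuous_eval_const (φ k)).measurable.comp (measurable_pi_apply k)

theorem pairing_add (w : Fin d → (SchwartzMap ℝ ℝ →L[ℝ] ℝ))
    (φ ψ : Fin d → SchwartzMap ℝ ℝ) :
    pairing w (φ + ψ) = pairing w φ + pairing w ψ := by
  simp [pairing, Finset.sum_add_distrib]

theorem pairing_smul (w : Fin d → (SchwartzMap ℝ ℝ →L[ℝ] ℝ)) (t : ℝ)
    (φ : Fin d → SchwartzMap ℝ ℝ) : pairing w (t • φ) = t * pairing w φ := by
  simp [pairing, Finset.mul_sum]

theorem SchwartzMap.integrable_mul (f g : SchwartzMap ℝ ℝ) : Integrable fun x => f x * g x :=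
  f.integrable.mul_of_top_left g.memLp_top

theorem innerL2_comm (φ ψ : Fin d → SchwartzMap ℝ ℝ) : innerL2 φ ψ = innerL2 ψ φ := by
  simp only [innerL2, mul_comm]

theorem innerL2_add_left (φ φ' ψ : Fin d → SchwartzMap ℝ ℝ) :
    innerL2 (φ + φ') ψ = innerL2 φ ψ + innerL2 φ' ψ := by
  simp only [innerL2, ← Finset.sum_add_distrib, Pi.add_apply, add_apply, add_mul]
  exact Finset.sum_congr rfl fun k _ =>
    integral_add ((φ k).integrable_mul (ψ k)) ((φ' k).integrable_mul (ψ k))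

theorem innerL2_smul_left (t : ℝ) (φ ψ : Fin d → SchwartzMap ℝ ℝ) :
    innerL2 (t • φ) ψ = t * innerL2 φ ψ := by
  simp only [innerL2, Finset.mul_sum, ← integral_const_mul, Pi.smul_apply,
    smul_apply, smul_eq_mul, mul_assoc]

theorem innerL2_add_right (φ ψ ψ' : Fin d → SchwartzMap ℝ ℝ) :
    innerL2 φ (ψ + ψ') = innerL2 φ ψ + innerL2 φ ψ' := by
  rw [innerL2_comm, innerL2_add_left, innerL2_comm ψ, innerL2_comm ψ']

theorem innerL2_smul_right (t : ℝ) (φ ψ : Fin d → SchwartzMap ℝ ℝ) :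
    innerL2 φ (t • ψ) = t * innerL2 φ ψ := by
  rw [innerL2_comm, innerL2_smul_left, innerL2_comm]

end

theorem grey_noise_covariance_general (d : ℕ) (β : ℝ) (hβ0 : 0 < β)
    (μ : Measure (Fin d → (SchwartzMap ℝ ℝ →L[ℝ] ℝ))) [IsProbabilityMeasure μ]
    (hchar : ∀ φ : Fin d → SchwartzMap ℝ ℝ,
      ∫ w, Complex.exp (Complex.I * (pairing w φ)) ∂μ
        = (mittagLeffler β (-(innerL2 φ φ) / 2) : ℂ))
    (φ ψ : Fin d → SchwartzMap ℝ ℝ) :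
    Integrable (fun w => pairing w φ * pairing w ψ) μ ∧
    ∫ w, pairing w φ * pairing w ψ ∂μ = (1 / Real.Gamma (β + 1)) * innerL2 φ ψ := by
  have hcos (χ : Fin d → SchwartzMap ℝ ℝ) (t : ℝ) :
      ∫ w, cos (t * pairing w χ) ∂μ = mittagLeffler β (-(t ^ 2 * innerL2 χ χ) / 2) := by
    simp_rw [← pairing_smul]
    rw [integral_cos_eq_re_integral_exp_mul_I (measurable_pairing (t • χ)).aemeasurable, hchar,
      Complex.ofReal_re, innerL2_smul_left, innerL2_smul_right, ← mul_assoc, sq]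
  have hsq (χ : Fin d → SchwartzMap ℝ ℝ) : Integrable (fun w => pairing w χ ^ 2) μ ∧
      ∫ w, pairing w χ ^ 2 ∂μ = innerL2 χ χ * (Gamma (β + 1))⁻¹ := by
    have hlim := (hasDerivAt_mittagLeffler_zero hβ0.le).tendsto_two_mul_sub_div_sq (innerL2 χ χ)
    rw [mittagLeffler_zero] at hlim
    simp_rw [← hcos] at hlim
    exact integrable_sq_and_integral_sq_eq_of_tendsto_cos (measurable_pairing χ).aemeasurable hlim
  obtain ⟨hφ, hφφ⟩ := hsq φ
  obtain ⟨hψ, hψψ⟩ := hsq ψ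
  obtain ⟨-, hsum⟩ := hsq (φ + ψ)
  have hφ2 := (memLp_two_iff_integrable_sq (measurable_pairing φ).aestronglyMeasurable).2 hφ
  have hψ2 := (memLp_two_iff_integrable_sq (measurable_pairing ψ).aestronglyMeasurable).2 hψ
  refine ⟨hφ2.integrable_mul hψ2, ?_⟩
  simp only [pairing_add] at hsum
  rw [integral_add_sq hφ2 hψ2, hφφ, hψψ, innerL2_add_left, innerL2_add_right,
    innerL2_add_right, innerL2_comm ψ φ] at hsum
  linear_combination hsum / 2

/-- If `μ` is a Borel probability measure on `S'_d` whose characteristic functional is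
`φ ↦ E_β(-|φ|₀²/2)` with `0 < β ≤ 1`, then for all `φ, ψ ∈ S_d` the second mixed moment
exists and `∫ ⟨w, φ⟩₀ ⟨w, ψ⟩₀ dμ(w) = ⟨φ, ψ⟩₀ / Γ(β + 1)`. -/
theorem grey_noise_covariance (d : ℕ) (β : ℝ) (hβ0 : 0 < β) (hβ1 : β ≤ 1)
    (μ : Measure (Fin d → (SchwartzMap ℝ ℝ →L[ℝ] ℝ))) [IsProbabilityMeasure μ]
    (hchar : ∀ φ : Fin d → SchwartzMap ℝ ℝ,
      ∫ w, Complex.exp (Complex.I * (pairing w φ)) ∂μ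
        = (mittagLeffler β (-(innerL2 φ φ) / 2) : ℂ))
    (φ ψ : Fin d → SchwartzMap ℝ ℝ) :
    Integrable (fun w => pairing w φ * pairing w ψ) μ ∧
    ∫ w, pairing w φ * pairing w ψ ∂μ = (1 / Real.Gamma (β + 1)) * innerL2 φ ψ :=
  grey_noise_covariance_general d β hβ0 μ hchar φ ψ
end
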